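/- Let V be a finite-dimensional ℚ-vector space, P a finite set, c : P → V a function, and B : P → ℝ≥0. For a decomposition Σ = ((b₁,D₁),…,(b_k,D_k)) of B (i.e., bᵢ > 0 real, Dᵢ : P → ℕ nonzero, and Σᵢ bᵢDᵢ(p) ≤ B(p) for all p), define f(Σ) = dim_ℚ span{ Σ_{p∈P} Dᵢ(p)·c(p) : 1 ≤ i ≤ k } − Σᵢ bᵢ. Then the infimum of f(Σ) over all decompositions Σ of B is attained by some decomposition. -/

import Mathlib

/-!
Since the rank is an integer in `[0, dim V]`, it suffices to show that for each `r` the supremum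
of `Σ bᵢ` over decompositions of rank at most `r` is attained. Applying Carathéodory's theorem to
`Σ bᵢ Dᵢ / Σ bᵢ ∈ conv {Dᵢ}`, every decomposition can be replaced by one with at most `|P| + 1`
parts, the same total weight and a subfamily of its `Dᵢ`. Along a maximising sequence of such
decompositions the weights `bᵢ` and the products `bᵢ Dᵢ` are bounded, so a subsequence converges;
where a limit weight is positive the integer vectors `Dᵢ` stabilise, and the parts whose weight
tends to `0` are dropped.
-/

open Filter Topology Finset

theorem exists_eventually_eq_of_tendsto_natCast {α : Type*} {l : Filter α} [l.NeBot]
    {a : α → ℕ} {x : ℝ} (h : Tendsto (fun j => (a j : ℝ)) l (𝓝 x)) :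
    ∃ n : ℕ, x = n ∧ ∀ᶠ j in l, a j = n := by
  obtain ⟨n, rfl⟩ : x ∈ Set.range ((↑) : ℕ → ℝ) :=
    Nat.isClosedEmbedding_coe_real.isClosed_range.mem_of_tendsto h
      (Eventually.of_forall fun j => Set.mem_range_self _)
  have : Tendsto a l (𝓝 n) := Nat.isClosedEmbedding_coe_real.tendsto_nhds_iff.2 h
  exact ⟨n, rfl, by simpa [nhds_discrete] using this⟩

theorem Fintype.sum_extend_zero {ι κ M : Type*} [Fintype ι] [Fintype κ] [AddCommMonoid M]
    (e : ι ↪ κ) (f : ι → M) : ∑ j, Function.extend e f 0 j = ∑ i, f i :=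
  (Fintype.sum_of_injective e e.injective _ _
    (fun j hj => Function.extend_apply' f (0 : κ → M) j hj)
    (fun i => (e.injective.extend_apply _ _ i).symm)).symm

section Decomposition

variable {P : Type*} {ι κ : Type*} [Fintype ι] [Fintype κ]

structure IsDecomposition (B : P → ℝ) (b : ι → ℝ) (D : ι → P → ℕ) : Prop where
  pos : ∀ i, 0 < b i
  ne_zero : ∀ i, D i ≠ 0
  sum_le : ∀ p, ∑ i, b i * D i p ≤ B p

structure IsWeakDecomposition (B : P → ℝ) (b : ι → ℝ) (D : ι → P → ℕ) : Prop where
  nonneg : ∀ i, 0 ≤ b i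
  ne_zero_of_pos : ∀ i, 0 < b i → D i ≠ 0
  sum_le : ∀ p, ∑ i, b i * D i p ≤ B p

variable {B : P → ℝ} {b : ι → ℝ} {D : ι → P → ℕ}

theorem IsDecomposition.isWeakDecomposition (h : IsDecomposition B b D) :
    IsWeakDecomposition B b D :=
  ⟨fun i => (h.pos i).le, fun i _ => h.ne_zero i, h.sum_le⟩

namespace IsWeakDecomposition

theorem mul_le (h : IsWeakDecomposition B b D) (i : ι) (p : P) : b i * D i p ≤ B p :=
  (single_le_sum (f := fun i => b i * D i p)
    (fun j _ => mul_nonneg (h.nonneg j) (Nat.cast_nonneg _)) (mem_univ i)).trans (h.sum_le p)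

theorem le_sum_mul [Fintype P] (h : IsWeakDecomposition B b D) (i : ι) :
    b i ≤ ∑ p, b i * D i p := by
  rcases (h.nonneg i).eq_or_lt with hi | hi
  · simp [← hi]
  obtain ⟨p, hp⟩ := Function.ne_iff.1 (h.ne_zero_of_pos i hi)
  calc b i ≤ b i * D i p :=
        le_mul_of_one_le_right hi.le (by exact_mod_cast Nat.one_le_iff_ne_zero.2 hp)
    _ ≤ ∑ p, b i * D i p :=
      single_le_sum (f := fun p => b i * D i p) (fun q _ => mul_nonneg hi.le (Nat.cast_nonneg _))
        (mem_univ p)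

theorem sum_weight_le [Fintype P] (h : IsWeakDecomposition B b D) : ∑ i, b i ≤ ∑ p, B p :=
  calc ∑ i, b i ≤ ∑ i, ∑ p, b i * D i p := sum_le_sum fun i _ => h.le_sum_mul i
    _ = ∑ p, ∑ i, b i * D i p := sum_comm
    _ ≤ ∑ p, B p := sum_le_sum fun p _ => h.sum_le p

theorem weight_le [Fintype P] (h : IsWeakDecomposition B b D) (i : ι) : b i ≤ ∑ p, B p :=
  (single_le_sum (fun j _ => h.nonneg j) (mem_univ i)).trans h.sum_weight_le

theorem extend (h : IsWeakDecomposition B b D) (e : ι ↪ κ) :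
    IsWeakDecomposition B (Function.extend e b 0) (Function.extend e D 0) := by
  refine ⟨fun j => ?_, fun j hj => ?_, fun p => ?_⟩
  · by_cases hj : ∃ i, e i = j
    · obtain ⟨i, rfl⟩ := hj
      rw [e.injective.extend_apply]; exact h.nonneg i
    · rw [Function.extend_apply' _ _ _ hj]; rfl
  · by_cases hj' : ∃ i, e i = j
    · obtain ⟨i, rfl⟩ := hj'
      rw [e.injective.extend_apply] at hj ⊢; exact h.ne_zero_of_pos i hj
    · rw [Function.extend_apply' _ _ _ hj'] at hj; exact absurd hj (lt_irrefl 0)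
  · refine le_of_eq_of_le (Fintype.sum_of_injective e e.injective _ _ (fun j hj => ?_)
      (fun i => ?_)).symm (h.sum_le p)
    · simp [Function.extend_apply' _ _ _ hj]
    · simp [e.injective.extend_apply]

theorem exists_isDecomposition_comp (h : IsWeakDecomposition B b D) :
    ∃ (k : ℕ) (b' : Fin k → ℝ) (σ : Fin k → ι),
      IsDecomposition B b' (D ∘ σ) ∧ ∑ i, b' i = ∑ i, b i := by
  let σ : Fin _ → ι := Subtype.val ∘ (Fintype.equivFin {i // 0 < b i}).symm
  have hσ : σ.Injective := Subtype.val_injective.comp (Equiv.injective _)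
  have hσ_pos : ∀ x, 0 < b (σ x) := fun x => ((Fintype.equivFin _).symm x).2
  have hσ_range : ∀ i ∉ Set.range σ, b i = 0 := fun i hi =>
    ((h.nonneg i).eq_or_lt.resolve_right
      fun hpos => hi ⟨Fintype.equivFin _ ⟨i, hpos⟩, by simp [σ]⟩).symm
  refine ⟨_, b ∘ σ, σ, ⟨hσ_pos, fun x => h.ne_zero_of_pos _ (hσ_pos x), fun p => ?_⟩,
    Fintype.sum_of_injective σ hσ _ _ hσ_range fun _ => rfl⟩
  refine le_of_eq_of_le
    (Fintype.sum_of_injective σ hσ _ _ (fun i hi => ?_) fun _ => rfl) (h.sum_le p)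
  simp [hσ_range i hi]

end IsWeakDecomposition

end Decomposition

section Caratheodory

variable {P : Type*} [Fintype P] {ι : Type*} [Fintype ι]
  {B : P → ℝ} {b : ι → ℝ} {D : ι → P → ℕ}

theorem IsDecomposition.exists_isWeakDecomposition_fin_card_succ (h : IsDecomposition B b D) :
    ∃ (b' : Fin (Fintype.card P + 1) → ℝ) (D' : Fin (Fintype.card P + 1) → P → ℕ),
      IsWeakDecomposition B b' D' ∧ ∑ j, b' j = ∑ i, b i ∧ ∀ j, D' j = 0 ∨ ∃ i, D' j = D i := by
  rcases isEmpty_or_nonempty ι with hι | hι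
  · exact ⟨0, 0, ⟨fun _ => le_rfl, fun _ h => absurd h (lt_irrefl 0),
      fun p => by simpa using h.sum_le p⟩, by simp, fun _ => Or.inl rfl⟩
  set s := ∑ i, b i
  have hs : 0 < s := sum_pos (fun i _ => h.pos i) univ_nonempty
  let Dr : ι → P → ℝ := fun i p => D i p
  have hx : ∑ i, (b i / s) • Dr i ∈ convexHull ℝ (Set.range Dr) :=
    (convex_convexHull ℝ _).sum_mem (fun i _ => (div_pos (h.pos i) hs).le)
      (by rw [← sum_div, div_self hs.ne']) fun i _ => subset_convexHull ℝ _ (Set.mem_range_self i)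
  obtain ⟨ι', _, z, w, hz, hz_indep, hw_pos, hw_sum, hwz⟩ :=
    eq_pos_convex_span_of_mem_convexHull hx
  choose σ hσ using fun a => hz (Set.mem_range_self a)
  have hcard : Fintype.card ι' ≤ Fintype.card (Fin (Fintype.card P + 1)) := by
    simpa using hz_indep.card_le_finrank_succ.trans
      (Nat.add_le_add_right ((Submodule.finrank_le _).trans_eq (by simp)) 1)
  obtain ⟨e⟩ := Function.Embedding.nonempty_of_card_le hcard
  have hmass : ∀ p, ∑ a, s * w a * D (σ a) p = ∑ i, b i * D i p := by
    intro p
    calc ∑ a, s * w a * D (σ a) p = s * (∑ a, w a • z a) p := by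
          simp [Finset.sum_apply, mul_sum, mul_assoc, ← hσ, Dr]
      _ = s * (∑ i, (b i / s) • Dr i) p := by rw [hwz]
      _ = ∑ i, b i * D i p := by
          simp only [Finset.sum_apply, Pi.smul_apply, smul_eq_mul, mul_sum, Dr]
          exact sum_congr rfl fun i _ => by field_simp
  have hdec : IsDecomposition B (fun a => s * w a) (D ∘ σ) :=
    ⟨fun a => mul_pos hs (hw_pos a), fun a => h.ne_zero _,
      fun p => (hmass p).trans_le (h.sum_le p)⟩
  refine ⟨_, _, hdec.isWeakDecomposition.extend e, ?_, fun j => ?_⟩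
  · rw [Fintype.sum_extend_zero, ← mul_sum, hw_sum, mul_one]
  · by_cases hj : ∃ a, e a = j
    · obtain ⟨a, rfl⟩ := hj
      exact Or.inr ⟨σ a, e.injective.extend_apply _ _ a⟩
    · exact Or.inl (Function.extend_apply' _ _ _ hj)

end Caratheodory

theorem exists_isWeakDecomposition_of_tendsto {P κ : Type*} [Fintype P] [Fintype κ]
    {B : P → ℝ} {b : ℕ → κ → ℝ} {D : ℕ → κ → P → ℕ}
    (h : ∀ j, IsWeakDecomposition B (b j) (D j)) {s : ℝ}
    (hs : Tendsto (fun j => ∑ i, b j i) atTop (𝓝 s)) :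
    ∃ (j : ℕ) (b' : κ → ℝ), IsWeakDecomposition B b' (D j) ∧ ∑ i, b' i = s := by
  let u : ℕ → κ → P → ℝ := fun j i p => b j i * D j i p
  have hbox : ∀ j, (b j, u j) ∈
      Set.Icc (0 : (κ → ℝ) × (κ → P → ℝ)) (fun _ => ∑ p, B p, fun _ => B) := fun j =>
    ⟨⟨fun i => (h j).nonneg i, fun i p => mul_nonneg ((h j).nonneg i) (Nat.cast_nonneg _)⟩,
      ⟨fun i => (h j).weight_le i, fun i p => (h j).mul_le i p⟩⟩
  obtain ⟨⟨bl, ul⟩, hl_box, φ, hφ, hlim⟩ := isCompact_Icc.tendsto_subseq hbox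
  have hbl : ∀ i, 0 ≤ bl i := hl_box.1.1
  have hul : ∀ i p, 0 ≤ ul i p := hl_box.1.2
  have hb : ∀ i, Tendsto (fun j => b (φ j) i) atTop (𝓝 (bl i)) := fun i =>
    ((continuous_apply i).tendsto _).comp ((continuous_fst.tendsto _).comp hlim)
  have hu : ∀ i p, Tendsto (fun j => u (φ j) i p) atTop (𝓝 (ul i p)) := fun i p =>
    ((continuous_apply p).tendsto _).comp
      (((continuous_apply i).tendsto _).comp ((continuous_snd.tendsto _).comp hlim))
  -- Where the limit weight is positive, `D j i p = u j i p / b j i` converges, hence stabilises.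
  have hstable : ∀ᶠ j in atTop, ∀ i, 0 < bl i →
      0 < b (φ j) i ∧ ∀ p, bl i * D (φ j) i p = ul i p := by
    refine eventually_all.2 fun i => ?_
    by_cases hi : 0 < bl i
    · have hpos := (hb i).eventually (eventually_gt_nhds hi)
      have hD : ∀ p, ∀ᶠ j in atTop, bl i * D (φ j) i p = ul i p := fun p => by
        have hconv : Tendsto (fun j => (D (φ j) i p : ℝ)) atTop (𝓝 (ul i p / bl i)) :=
          ((hu i p).div (hb i) hi.ne').congr' (by
            filter_upwards [hpos] with j hj using mul_div_cancel_left₀ _ hj.ne')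
        obtain ⟨n, hn, hev⟩ := exists_eventually_eq_of_tendsto_natCast hconv
        filter_upwards [hev] with j hj
        rw [hj, ← hn, mul_div_cancel₀ _ hi.ne']
      filter_upwards [hpos, eventually_all.2 hD] with j h₁ h₂ using fun _ => ⟨h₁, h₂⟩
    · exact Eventually.of_forall fun _ h => absurd h hi
  obtain ⟨j, hj⟩ := hstable.exists
  refine ⟨φ j, bl, ⟨hbl, fun i hi => (h (φ j)).ne_zero_of_pos i (hj i hi).1,
    fun p => ?_⟩, tendsto_nhds_unique (tendsto_finsetSum _ fun i _ => hb i)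
      (hs.comp hφ.tendsto_atTop)⟩
  calc ∑ i, bl i * D (φ j) i p ≤ ∑ i, ul i p := sum_le_sum fun i _ => by
        rcases (hbl i).eq_or_lt with hi | hi
        · rw [← hi, zero_mul]; exact hul i p
        · exact ((hj i hi).2 p).le
    _ ≤ B p := le_of_tendsto' (tendsto_finsetSum _ fun i _ => hu i p)
        fun j => (h (φ j)).sum_le p

section RankBounded

variable {V : Type*} [AddCommGroup V] [Module ℚ V] {P : Type*} [Fintype P]

def lincomb (c : P → V) (d : P → ℕ) : V := ∑ p, (d p : ℚ) • c p

noncomputable def spanRank {ι : Type*} (c : P → V) (D : ι → P → ℕ) : ℕ :=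
  Module.finrank ℚ (Submodule.span ℚ (Set.range fun i => lincomb c (D i)))

theorem spanRank_le_of_forall_mem [FiniteDimensional ℚ V] {ι : Type*} {c : P → V}
    {D : ι → P → ℕ} {W : Submodule ℚ V} (h : ∀ i, lincomb c (D i) ∈ W) :
    spanRank c D ≤ Module.finrank ℚ W :=
  Submodule.finrank_mono (Submodule.span_le.2 (Set.range_subset_iff.2 h))

def massesOfRankLE (c : P → V) (B : P → ℝ) (r : ℕ) : Set ℝ :=
  {s | ∃ (k : ℕ) (b : Fin k → ℝ) (D : Fin k → P → ℕ),
    IsDecomposition B b D ∧ spanRank c D ≤ r ∧ ∑ i, b i = s}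

variable (c : P → V) {B : P → ℝ}

theorem zero_mem_massesOfRankLE (hB : ∀ p, 0 ≤ B p) (r : ℕ) : 0 ∈ massesOfRankLE c B r :=
  ⟨0, Fin.elim0, Fin.elim0, ⟨Fin.rec0, Fin.rec0, fun p => by simpa using hB p⟩,
    by rw [spanRank, Set.range_eq_empty, Submodule.span_empty, finrank_bot]; exact r.zero_le,
    by simp⟩

theorem bddAbove_massesOfRankLE (B : P → ℝ) (r : ℕ) : BddAbove (massesOfRankLE c B r) :=
  ⟨∑ p, B p, by rintro _ ⟨k, b, D, h, -, rfl⟩; exact h.isWeakDecomposition.sum_weight_le⟩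

theorem sSup_mem_massesOfRankLE [FiniteDimensional ℚ V] (hB : ∀ p, 0 ≤ B p) (r : ℕ) :
    sSup (massesOfRankLE c B r) ∈ massesOfRankLE c B r := by
  obtain ⟨s, -, hs, hs_mem⟩ :=
    exists_seq_tendsto_sSup ⟨0, zero_mem_massesOfRankLE c hB r⟩ (bddAbove_massesOfRankLE c B r)
  have hfin : ∀ j, ∃ (b : Fin (Fintype.card P + 1) → ℝ) (D : Fin (Fintype.card P + 1) → P → ℕ)
      (W : Submodule ℚ V), IsWeakDecomposition B b D ∧ ∑ i, b i = s j ∧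
        Module.finrank ℚ W ≤ r ∧ ∀ i, lincomb c (D i) ∈ W := by
    intro j
    obtain ⟨k, b, D, hD, hr, hsum⟩ := hs_mem j
    obtain ⟨b', D', hD', hsum', hD'D⟩ := hD.exists_isWeakDecomposition_fin_card_succ
    refine ⟨b', D', _, hD', hsum'.trans hsum, hr, fun i => ?_⟩
    rcases hD'D i with h0 | ⟨i', hi'⟩
    · simp [h0, lincomb]
    · rw [hi']; exact Submodule.subset_span ⟨i', rfl⟩
  choose b D W hD hsum hW hDW using hfin
  obtain ⟨j, b', hb', hsum'⟩ :=
    exists_isWeakDecomposition_of_tendsto hD (by simpa only [hsum] using hs)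
  obtain ⟨k, b'', σ, hb'', hsum''⟩ := hb'.exists_isDecomposition_comp
  exact ⟨k, b'', D j ∘ σ, hb'',
    (spanRank_le_of_forall_mem fun x => hDW j (σ x)).trans (hW j), hsum''.trans hsum'⟩

end RankBounded

theorem stmt_4 {V : Type*} [AddCommGroup V] [Module ℚ V] [FiniteDimensional ℚ V]
    {P : Type*} [Fintype P] (c : P → V) (B : P → ℝ) (hB : ∀ p, 0 ≤ B p) :
    ∃ (k : ℕ) (b : Fin k → ℝ) (D : Fin k → P → ℕ),
      (∀ i, 0 < b i) ∧ (∀ i, D i ≠ 0) ∧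
      (∀ p, ∑ i, b i * (D i p : ℝ) ≤ B p) ∧
      ∀ (k' : ℕ) (b' : Fin k' → ℝ) (D' : Fin k' → P → ℕ),
        (∀ i, 0 < b' i) → (∀ i, D' i ≠ 0) →
        (∀ p, ∑ i, b' i * (D' i p : ℝ) ≤ B p) →
        (Module.finrank ℚ (Submodule.span ℚ
            (Set.range fun i : Fin k => ∑ p, (D i p : ℚ) • c p)) : ℝ) - ∑ i, b i
          ≤ (Module.finrank ℚ (Submodule.span ℚ
            (Set.range fun i : Fin k' => ∑ p, (D' i p : ℚ) • c p)) : ℝ) - ∑ i, b' i := by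
  obtain ⟨r, -, hr⟩ := (range (Module.finrank ℚ V + 1)).exists_min_image
    (fun r => (r : ℝ) - sSup (massesOfRankLE c B r)) ⟨0, by simp⟩
  obtain ⟨k, b, D, hD, hrank, hsum⟩ := sSup_mem_massesOfRankLE c hB r
  refine ⟨k, b, D, hD.pos, hD.ne_zero, hD.sum_le, fun k' b' D' hb' hD' hle => ?_⟩
  have hmass : ∑ i, b' i ≤ sSup (massesOfRankLE c B (spanRank c D')) :=
    le_csSup (bddAbove_massesOfRankLE c B _) ⟨k', b', D', ⟨hb', hD', hle⟩, le_rfl, rfl⟩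
  have hmin := hr (spanRank c D') (mem_range.2 (Nat.lt_succ_of_le (Submodule.finrank_le _)))
  have hrank' : (spanRank c D : ℝ) ≤ r := by exact_mod_cast hrank
  change (spanRank c D : ℝ) - _ ≤ (spanRank c D' : ℝ) - _
  linarith
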